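/- Let ψ(M) = (1/(rε)) · ln((p2 + √(1+p2²))/(p1 + √(1+p1²))) with ε = d/r > 0, |θ| < π/2, p1 = (−Mε/2 − sin θ)/cos θ, p2 = (Mε/2 − sin θ)/cos θ. Then lim_{M → ∞} ψ(M)²/M = 0 and lim_{M → ∞} ψ(M) = ∞; in fact ψ(M) grows like (2/(d)) ln(M) as M → ∞ (i.e., ψ(M)/ln M → 2/d). -/

import Mathlib

/-!
With `a = ε / (2 cos θ) > 0` and `t = tan θ`, the logarithm in `ψ` is a difference of two
inverse hyperbolic sines, of `p₂ = a M - t` and of `p₁ = -(a M + t)`, so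
`ψ M = (arsinh (a M - t) + arsinh (a M + t)) / d`. Since `arsinh x = log (2 x) + o(1)` as
`x → ∞`, each of the two terms is `log M + O(1)`, hence `ψ M / log M → 2 / d`. The other two
limits follow from this one, because `log M → ∞` and `(log M)² / M → 0`.
-/

open Real Filter Topology

namespace Real

lemma log_add_sqrt_div_add_sqrt (x y : ℝ) :
    log ((x + √(1 + x ^ 2)) / (y + √(1 + y ^ 2))) = arsinh x - arsinh y := by
  rw [← exp_arsinh x, ← exp_arsinh y, ← exp_sub, log_exp]

lemma tendsto_arsinh_sub_log_atTop :
    Tendsto (fun x => arsinh x - log x) atTop (𝓝 (log 2)) := by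
  have hlim : Tendsto (fun x : ℝ => 1 + √(x⁻¹ ^ 2 + 1)) atTop (𝓝 2) := by
    have hcont : Continuous fun t : ℝ => 1 + √(t ^ 2 + 1) := by fun_prop
    convert (hcont.tendsto 0).comp tendsto_inv_atTop_zero using 2
    all_goals norm_num
  refine ((continuousAt_log two_ne_zero).tendsto.comp hlim).congr' ?_
  filter_upwards [eventually_gt_atTop 0] with x hx
  have hfactor : x + √(1 + x ^ 2) = x * (1 + √(x⁻¹ ^ 2 + 1)) := by
    rw [show 1 + x ^ 2 = x ^ 2 * (x⁻¹ ^ 2 + 1) by field_simp, sqrt_mul (sq_nonneg x),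
      sqrt_sq hx.le]
    ring
  rw [Function.comp_apply, arsinh, hfactor, log_mul hx.ne' (by positivity)]
  ring

lemma tendsto_log_affine_sub_log_atTop {a : ℝ} (ha : 0 < a) (b : ℝ) :
    Tendsto (fun x => log (a * x + b) - log x) atTop (𝓝 (log a)) := by
  have hlim : Tendsto (fun x : ℝ => a + b * x⁻¹) atTop (𝓝 a) := by
    simpa using tendsto_inv_atTop_zero.const_mul b |>.const_add a
  refine ((continuousAt_log ha.ne').tendsto.comp hlim).congr' ?_
  filter_upwards [eventually_gt_atTop 0, hlim.eventually (eventually_gt_nhds ha)] with x hx hpos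
  rw [Function.comp_apply, show a * x + b = x * (a + b * x⁻¹) by field_simp,
    log_mul hx.ne' hpos.ne']
  ring

lemma tendsto_arsinh_affine_sub_log_atTop {a : ℝ} (ha : 0 < a) (b : ℝ) :
    Tendsto (fun x => arsinh (a * x + b) - log x) atTop (𝓝 (log (2 * a))) := by
  have haff : Tendsto (fun x => a * x + b) atTop atTop :=
    tendsto_atTop_add_const_right _ b (tendsto_id.const_mul_atTop ha)
  rw [log_mul two_ne_zero ha.ne']
  refine ((tendsto_arsinh_sub_log_atTop.comp haff).add
    (tendsto_log_affine_sub_log_atTop ha b)).congr fun x => ?_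
  simp only [Function.comp_apply]
  ring

end Real

lemma Filter.Tendsto.div_nhds_one_of_sub {α : Type*} {l : Filter α} {f g : α → ℝ} {c : ℝ}
    (h : Tendsto (fun x => f x - g x) l (𝓝 c)) (hg : Tendsto g l atTop) :
    Tendsto (fun x => f x / g x) l (𝓝 1) := by
  have hsmall := (h.div_atTop hg).add_const 1
  rw [zero_add] at hsmall
  refine hsmall.congr' ?_
  filter_upwards [hg.eventually_gt_atTop 0] with x hx
  field_simp
  ring

section GrowthLikeLog

variable {f : ℝ → ℝ} {c : ℝ}

lemma tendsto_sq_div_self_of_tendsto_div_log (h : Tendsto (fun x => f x / log x) atTop (𝓝 c)) :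
    Tendsto (fun x => f x ^ 2 / x) atTop (𝓝 0) := by
  have hlog : Tendsto (fun x => log x ^ 2 / x) atTop (𝓝 0) := by
    simpa using tendsto_pow_log_div_mul_add_atTop 1 0 2 one_ne_zero
  have hprod := (h.pow 2).mul hlog
  rw [mul_zero] at hprod
  refine hprod.congr' ?_
  filter_upwards [eventually_gt_atTop 1] with x hx
  have := (log_pos hx).ne'
  field_simp

lemma tendsto_atTop_of_tendsto_div_log (hc : 0 < c)
    (h : Tendsto (fun x => f x / log x) atTop (𝓝 c)) : Tendsto f atTop atTop := by
  refine (Tendsto.pos_mul_atTop hc h tendsto_log_atTop).congr' ?_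
  filter_upwards [eventually_gt_atTop 1] with x hx
  have := (log_pos hx).ne'
  field_simp

end GrowthLikeLog

theorem stmt_11 (r d θ : ℝ) (hr : 0 < r) (hd : 0 < d) (hθ : |θ| < π / 2)
    (ε : ℝ) (hε : ε = d / r)
    (ψ : ℝ → ℝ)
    (hψ : ψ = fun M : ℝ =>
      (1 / (r * ε)) *
        Real.log ((((M * ε / 2 - Real.sin θ) / Real.cos θ) +
            Real.sqrt (1 + ((M * ε / 2 - Real.sin θ) / Real.cos θ) ^ 2)) /
          (((-(M * ε / 2) - Real.sin θ) / Real.cos θ) +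
            Real.sqrt (1 + ((-(M * ε / 2) - Real.sin θ) / Real.cos θ) ^ 2)))) :
    Tendsto (fun M : ℝ => ψ M ^ 2 / M) atTop (nhds 0) ∧
    Tendsto ψ atTop atTop ∧
    Tendsto (fun M : ℝ => ψ M / Real.log M) atTop (nhds (2 / d)) := by
  have hcos : 0 < cos θ := cos_pos_of_mem_Ioo (abs_lt.mp hθ)
  have hε_pos : 0 < ε := by rw [hε]; positivity
  have hrε : r * ε = d := by rw [hε]; field_simp
  set a := ε / (2 * cos θ) with ha_def
  have ha : 0 < a := by positivity
  have hψ_arsinh (M : ℝ) : ψ M = (arsinh (a * M + -tan θ) + arsinh (a * M + tan θ)) / d := by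
    have hp₂ : (M * ε / 2 - sin θ) / cos θ = a * M + -tan θ := by
      rw [ha_def, tan_eq_sin_div_cos]; field_simp; ring
    have hp₁ : (-(M * ε / 2) - sin θ) / cos θ = -(a * M + tan θ) := by
      rw [ha_def, tan_eq_sin_div_cos]; field_simp; ring
    rw [hψ]
    beta_reduce
    rw [hp₁, hp₂, hrε, log_add_sqrt_div_add_sqrt, arsinh_neg]
    ring
  have hratio : Tendsto (fun M => ψ M / log M) atTop (𝓝 (2 / d)) := by
    have hone (b : ℝ) : Tendsto (fun M => arsinh (a * M + b) / log M) atTop (𝓝 1) :=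
      (tendsto_arsinh_affine_sub_log_atTop ha b).div_nhds_one_of_sub tendsto_log_atTop
    convert ((hone (-tan θ)).add (hone (tan θ))).div_const d using 2 with M
    · rw [hψ_arsinh]; ring
    · ring
  exact ⟨tendsto_sq_div_self_of_tendsto_div_log hratio,
    tendsto_atTop_of_tendsto_div_log (by positivity) hratio, hratio⟩
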